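/- A finite set B of Wang tiles admits a periodic tiling of the plane if and only if for some m ≥ 1 the torus transition matrix T_m is not nilpotent, i.e., if and only if tr(T_m^n) > 0 for some m, n ≥ 1. -/

import Mathlib

structure WangTile (p : ℕ) where
  t : Fin p
  b : Fin p
  l : Fin p
  r : Fin p
deriving DecidableEq, Fintype

def IsTiling {p : ℕ} (B : Set (WangTile p)) (f : ℤ → ℤ → WangTile p) : Prop :=
  (∀ i j, f i j ∈ B) ∧ (∀ i j, (f i j).r = (f (i + 1) j).l) ∧
    (∀ i j, (f i j).t = (f i (j + 1)).b)

def IsPeriodic {p : ℕ} (f : ℤ → ℤ → WangTile p) : Prop :=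
  ∃ m n : ℕ, 1 ≤ m ∧ 1 ≤ n ∧ ∀ i j : ℤ, f (i + (m : ℤ)) j = f i j ∧ f i (j + (n : ℤ)) = f i j


/-- Cyclic successor on `Fin n`. -/
def finSucc {n : ℕ} (k : Fin n) : Fin n :=
  ⟨((k : ℕ) + 1) % n, Nat.mod_lt _ (Nat.lt_of_le_of_lt (Nat.zero_le _) k.isLt)⟩

/-- Vertically-periodic columns of `m` tiles from `B`. -/
abbrev PerCol (p m : ℕ) (B : Finset (WangTile p)) : Type :=
  {c : Fin m → WangTile p // (∀ k, c k ∈ B) ∧ ∀ k : Fin m, (c k).t = (c (finSucc k)).b}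

/-- The trace operator of order `m`. -/
def traceOp (p m : ℕ) (B : Finset (WangTile p)) :
    Matrix (PerCol p m B) (PerCol p m B) ℝ :=
  Matrix.of fun u v => if ∀ k : Fin m, (u.1 k).r = (v.1 k).l then 1 else 0

/-! A tiling that is `n`-periodic horizontally and `m`-periodic vertically is the same thing as an
`n`-periodic bi-infinite walk in the graph whose vertices are the vertically `m`-periodic columns
and whose edges are horizontal compatibility, i.e. the graph with adjacency matrix `T_m`. For a
nonnegative matrix `A`, `0 < tr (A ^ n)` exactly when that graph has a closed walk of length `n`,
which unrolls into an `n`-periodic walk. Finally `A` is not nilpotent iff `0 < tr (A ^ n)` for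
some `n ≥ 1`: powers of a nilpotent matrix are traceless, and conversely a walk longer than the
number of vertices revisits a vertex. -/

open Function

theorem isNilpotent_iff_exists_pos_pow_eq_zero {M : Type*} [MonoidWithZero M] {x : M} :
    IsNilpotent x ↔ ∃ k, 0 < k ∧ x ^ k = 0 :=
  ⟨fun ⟨k, hk⟩ => ⟨k + 1, k.succ_pos, by rw [pow_succ, hk, zero_mul]⟩,
    fun ⟨k, _, hk⟩ => ⟨k, hk⟩⟩

section Walks

-- The ring structure on `Fin n` makes `((i : ℤ) : Fin n)` the residue of `i` mod `n`.
open Fin.CommRing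

variable {α : Type*} {r : α → α → Prop} {n : ℕ}

theorem finSucc_eq_add_one [NeZero n] (k : Fin n) : finSucc k = k + 1 :=
  Fin.ext <| by simp [finSucc, Fin.val_add]

theorem periodic_comp_intCast [NeZero n] (c : Fin n → α) : Periodic (fun i : ℤ => c i) n := by
  intro i
  simp only [Int.cast_add, Int.cast_natCast, Fin.natCast_self, add_zero]

theorem rel_intCast_add_one [NeZero n] {c : Fin n → α} (hc : ∀ k, r (c k) (c (finSucc k)))
    (i : ℤ) : r (c i) (c ↑(i + 1)) := by
  simpa only [Int.cast_add, Int.cast_one, finSucc_eq_add_one] using hc i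

theorem Function.Periodic.rel_finSucc {g : ℤ → α} (hg : Periodic g n)
    (hr : ∀ i, r (g i) (g (i + 1))) (k : Fin n) : r (g (k : ℕ)) (g (finSucc k : ℕ)) := by
  have hmod (x : ℤ) : g (x % n) = g x := by
    rw [Int.emod_def, mul_comm]
    exact hg.sub_int_mul_eq _
  have hsucc : ((finSucc k : ℕ) : ℤ) = ((k : ℕ) + 1 : ℤ) % n := by simp [finSucc]
  rw [hsucc, hmod]
  exact hr _

theorem rel_finSucc_of_closed_walk {g : ℕ → α} (hg : ∀ t < n, r (g t) (g (t + 1)))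
    (hclosed : g n = g 0) (k : Fin n) : r (g k) (g (finSucc k)) := by
  have hsucc : g (finSucc k) = g (k + 1) := by
    rcases Nat.lt_or_ge ((k : ℕ) + 1) n with h | h
    · simp [finSucc, Nat.mod_eq_of_lt h]
    · have hk : (k : ℕ) + 1 = n := by omega
      simp only [finSucc, hk, Nat.mod_self, hclosed]
  rw [hsucc]
  exact hg k k.isLt

theorem exists_closed_subwalk_of_card_le [Fintype α] {g : ℕ → α} {k : ℕ}
    (hg : ∀ t < k, r (g t) (g (t + 1))) (hk : Fintype.card α ≤ k) :
    ∃ i L, 0 < L ∧ (∀ t < L, r (g (i + t)) (g (i + t + 1))) ∧ g (i + L) = g i := by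
  obtain ⟨i, j, hne, hij⟩ :=
    Fintype.exists_ne_map_eq_of_card_lt (fun t : Fin (k + 1) => g t)
      (by simpa using Nat.lt_succ_of_le hk)
  wlog hlt : i < j generalizing i j
  · exact this j i hne.symm hij.symm (lt_of_le_of_ne (not_lt.1 hlt) hne.symm)
  have hlt' : (i : ℕ) < j := hlt
  refine ⟨i, j - i, by omega, fun t ht => hg _ (by omega), ?_⟩
  rw [Nat.add_sub_cancel' hlt'.le]
  exact hij.symm

end Walks

namespace Matrix

variable {ι R : Type*} [Fintype ι] [DecidableEq ι]

section Semiring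

variable [Semiring R] [LinearOrder R] [IsStrictOrderedRing R] {A : Matrix ι ι R}

theorem pow_apply_pos_iff_exists_walk (hA : ∀ i j, 0 ≤ A i j) (k : ℕ) (i j : ι) :
    0 < (A ^ k) i j ↔ ∃ g : ℕ → ι, g 0 = i ∧ g k = j ∧ ∀ t < k, 0 < A (g t) (g (t + 1)) := by
  induction k generalizing j with
  | zero =>
    rw [pow_zero, one_apply]
    constructor
    · intro h
      split_ifs at h with hij
      · exact ⟨fun _ => i, rfl, hij, by simp⟩
      · exact absurd h (lt_irrefl 0)
    · rintro ⟨g, rfl, rfl, -⟩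
      simp
  | succ k ih =>
    rw [pow_succ, mul_apply, Finset.sum_pos_iff_of_nonneg
      fun l _ => mul_nonneg (pow_apply_nonneg hA k i l) (hA l j)]
    constructor
    · rintro ⟨l, -, hl⟩
      obtain ⟨g, hg0, hgk, hg⟩ := (ih l).1 (pos_of_mul_pos_left hl (hA l j))
      refine ⟨update g (k + 1) j, by simpa using hg0, by simp, fun t ht => ?_⟩
      rcases Nat.lt_succ_iff_lt_or_eq.1 ht with ht | rfl
      · rw [update_of_ne (by omega), update_of_ne (by omega)]
        exact hg t ht
      · simpa [hgk] using pos_of_mul_pos_right hl (pow_apply_nonneg hA t i l)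
    · rintro ⟨g, hg0, hgk, hg⟩
      exact ⟨g k, Finset.mem_univ _, mul_pos ((ih (g k)).2 ⟨g, hg0, rfl, fun t ht => hg t
        (ht.trans k.lt_succ_self)⟩) (hgk ▸ hg k k.lt_succ_self)⟩

theorem trace_pow_pos_of_closed_walk (hA : ∀ i j, 0 ≤ A i j) {g : ℕ → ι} {k : ℕ}
    (hg : ∀ t < k, 0 < A (g t) (g (t + 1))) (hclosed : g k = g 0) : 0 < trace (A ^ k) :=
  Finset.sum_pos' (fun u _ => pow_apply_nonneg hA k u u)
    ⟨g 0, Finset.mem_univ _, (pow_apply_pos_iff_exists_walk hA k _ _).2 ⟨g, rfl, hclosed, hg⟩⟩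

open Fin.CommRing in
theorem trace_pow_pos_iff_exists_periodic_walk (hA : ∀ i j, 0 ≤ A i j) {n : ℕ} (hn : 0 < n) :
    0 < trace (A ^ n) ↔ ∃ g : ℤ → ι, Periodic g n ∧ ∀ i, 0 < A (g i) (g (i + 1)) := by
  constructor
  · intro htr
    obtain ⟨u, -, hu⟩ := (Finset.sum_pos_iff_of_nonneg fun u _ => pow_apply_nonneg hA n u u).1 htr
    obtain ⟨g, hg0, hgn, hg⟩ := (pow_apply_pos_iff_exists_walk hA n u u).1 hu
    have := NeZero.of_pos hn
    exact ⟨fun i => g ((i : Fin n) : ℕ), periodic_comp_intCast fun k : Fin n => g k,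
      rel_intCast_add_one (r := fun u v => 0 < A u v) (c := fun k => g k)
        (rel_finSucc_of_closed_walk (r := fun u v => 0 < A u v) hg (hgn.trans hg0.symm))⟩
  · rintro ⟨g, hper, hg⟩
    exact trace_pow_pos_of_closed_walk hA (g := fun t : ℕ => g t) (fun t _ => hg t)
      (by simpa using hper 0)

end Semiring

theorem not_isNilpotent_iff_exists_trace_pow_pos [CommRing R] [LinearOrder R]
    [IsStrictOrderedRing R] {A : Matrix ι ι R} (hA : ∀ i j, 0 ≤ A i j) :
    ¬ IsNilpotent A ↔ ∃ n, 0 < n ∧ 0 < trace (A ^ n) := by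
  constructor
  · intro hnil
    obtain ⟨u, v, huv⟩ : ∃ u v, 0 < (A ^ Fintype.card ι) u v := by
      by_contra! h
      exact hnil ⟨_, ext fun u v => (h u v).antisymm (pow_apply_nonneg hA _ u v)⟩
    obtain ⟨g, -, -, hg⟩ := (pow_apply_pos_iff_exists_walk hA _ u v).1 huv
    obtain ⟨i, L, hL, hwalk, hclosed⟩ :=
      exists_closed_subwalk_of_card_le (r := fun u v => 0 < A u v) hg le_rfl
    exact ⟨L, hL, trace_pow_pos_of_closed_walk hA (g := fun t => g (i + t)) hwalk hclosed⟩
  · rintro ⟨n, hn, htr⟩ hnil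
    exact htr.ne' (isNilpotent_trace_of_isNilpotent (hnil.pow_of_pos hn.ne')).eq_zero

end Matrix

section Tiling

variable {p m : ℕ} {B : Finset (WangTile p)}

def HorizCompatible (u v : PerCol p m B) : Prop := ∀ k, (u.1 k).r = (v.1 k).l

theorem traceOp_nonneg (u v : PerCol p m B) : 0 ≤ traceOp p m B u v := by
  simp only [traceOp, Matrix.of_apply]
  split_ifs <;> simp

theorem traceOp_pos_iff {u v : PerCol p m B} : 0 < traceOp p m B u v ↔ HorizCompatible u v := by
  simp only [traceOp, Matrix.of_apply, HorizCompatible]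
  split_ifs with h <;> simp [h]

theorem exists_periodic_walk_of_periodic_tiling {f : ℤ → ℤ → WangTile p} (hf : IsTiling (↑B) f)
    (hper : IsPeriodic f) : ∃ m n : ℕ, 0 < m ∧ 0 < n ∧
      ∃ g : ℤ → PerCol p m B, Periodic g n ∧ ∀ i, HorizCompatible (g i) (g (i + 1)) := by
  obtain ⟨hmem, hhor, hver⟩ := hf
  obtain ⟨M, N, hM, hN, hMN⟩ := hper
  refine ⟨N, M, hN, hM, fun i => ⟨fun k => f i (k : ℕ), fun k => hmem _ _,
    Periodic.rel_finSucc (r := fun a b : WangTile p => a.t = b.b) (fun j => (hMN i j).2) (hver i)⟩,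
    fun i => Subtype.ext (funext fun k => (hMN i k).1), fun i k => hhor i k⟩

open Fin.CommRing in
theorem exists_periodic_tiling_of_periodic_walk {m n : ℕ} (hm : 0 < m) (hn : 0 < n)
    {g : ℤ → PerCol p m B} (hper : Periodic g n) (hg : ∀ i, HorizCompatible (g i) (g (i + 1))) :
    ∃ f : ℤ → ℤ → WangTile p, IsTiling (↑B) f ∧ IsPeriodic f := by
  have := NeZero.of_pos hm
  refine ⟨fun i j => (g i).1 j, ⟨fun i j => (g i).2.1 _, fun i j => hg i _,
    fun i j => rel_intCast_add_one (r := fun a b : WangTile p => a.t = b.b) (g i).2.2 j⟩,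
    n, m, hn, hm, fun i j => ⟨by simp only [hper i], periodic_comp_intCast (g i).1 j⟩⟩

theorem periodic_tiling_iff_exists_periodic_walk :
    (∃ f : ℤ → ℤ → WangTile p, IsTiling (↑B) f ∧ IsPeriodic f) ↔ ∃ m n : ℕ, 0 < m ∧ 0 < n ∧
      ∃ g : ℤ → PerCol p m B, Periodic g n ∧ ∀ i, HorizCompatible (g i) (g (i + 1)) :=
  ⟨fun ⟨_, hf, hper⟩ => exists_periodic_walk_of_periodic_tiling hf hper,
    fun ⟨_, _, hm, hn, _, hper, hg⟩ => exists_periodic_tiling_of_periodic_walk hm hn hper hg⟩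

theorem trace_traceOp_pow_pos_iff {n : ℕ} (hn : 0 < n) :
    0 < Matrix.trace (traceOp p m B ^ n) ↔
      ∃ g : ℤ → PerCol p m B, Periodic g n ∧ ∀ i, HorizCompatible (g i) (g (i + 1)) := by
  simp_rw [← traceOp_pos_iff]
  exact Matrix.trace_pow_pos_iff_exists_periodic_walk traceOp_nonneg hn

end Tiling

theorem periodic_tiling_iff_traceOp_not_nilpotent {p : ℕ} (B : Finset (WangTile p)) :
    ((∃ f : ℤ → ℤ → WangTile p, IsTiling (↑B) f ∧ IsPeriodic f) ↔
      ∃ m : ℕ, 1 ≤ m ∧ ¬ ∃ k : ℕ, 1 ≤ k ∧ traceOp p m B ^ k = 0) ∧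
    ((∃ f : ℤ → ℤ → WangTile p, IsTiling (↑B) f ∧ IsPeriodic f) ↔
      ∃ m n : ℕ, 1 ≤ m ∧ 1 ≤ n ∧ 0 < Matrix.trace (traceOp p m B ^ n)) := by
  have htrace : (∃ f : ℤ → ℤ → WangTile p, IsTiling (↑B) f ∧ IsPeriodic f) ↔
      ∃ m n : ℕ, 1 ≤ m ∧ 1 ≤ n ∧ 0 < Matrix.trace (traceOp p m B ^ n) := by
    rw [periodic_tiling_iff_exists_periodic_walk]
    exact exists₂_congr fun m n => and_congr_right fun _ => and_congr_right fun hn =>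
      (trace_traceOp_pow_pos_iff hn).symm
  refine ⟨htrace.trans ⟨?_, ?_⟩, htrace⟩
  · rintro ⟨m, n, hm, hn, htr⟩
    refine ⟨m, hm, fun hnil => ?_⟩
    exact (Matrix.not_isNilpotent_iff_exists_trace_pow_pos traceOp_nonneg).2 ⟨n, hn, htr⟩
      (isNilpotent_iff_exists_pos_pow_eq_zero.2 hnil)
  · rintro ⟨m, hm, hnil⟩
    obtain ⟨n, hn, htr⟩ := (Matrix.not_isNilpotent_iff_exists_trace_pow_pos traceOp_nonneg).1
      (mt isNilpotent_iff_exists_pos_pow_eq_zero.1 hnil)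
    exact ⟨m, n, hm, hn, htr⟩
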